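/- Let d = d₁ + ⋯ + d_r with r ≥ 2 and d_j ≥ 1, and let V : ℤ^d → ℂ be Γ-periodic. Then V is (d₁,…,d_{r-1}) ⊕ d_r-separable if and only if V is (s,t)-separable for every 1 ≤ i < m ≤ r-1 and every index s in block i and t in block m. -/

import Mathlib

open scoped BigOperators

/-- `f` depends only on the coordinates in `S`. -/
def DependsOnlyOn {d : ℕ} (S : Set (Fin d)) (f : (Fin d → ℤ) → ℂ) : Prop :=
  ∀ n n' : Fin d → ℤ, (∀ j ∈ S, n j = n' j) → f n = f n'

/-- `(s,t)`-separability. -/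
def SepPair {d : ℕ} (s t : Fin d) (V : (Fin d → ℤ) → ℂ) : Prop :=
  ∃ Vs Vt : (Fin d → ℤ) → ℂ,
    DependsOnlyOn ({t} : Set (Fin d))ᶜ Vs ∧
    DependsOnlyOn ({s} : Set (Fin d))ᶜ Vt ∧
    ∀ n, V n = Vs n + Vt n

/-- `Γ`-periodicity for `Γ = q₁ℤ ⊕ ⋯ ⊕ q_dℤ`. -/
def IsPeriodic {d : ℕ} (q : Fin d → ℕ) (V : (Fin d → ℤ) → ℂ) : Prop :=
  ∀ (n : Fin d → ℤ) (j : Fin d),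
    V (fun i => n i + if i = j then (q i : ℤ) else 0) = V n

/-- The offset `d₀ + ⋯ + d_{i-1}` of the `i`-th block. -/
def blockOffset {r : ℕ} (dv : Fin r → ℕ) (i : Fin r) : ℕ :=
  ∑ j ∈ Finset.Iio i, dv j

/-- The set of coordinate indices lying in the `i`-th block. -/
def blockSet {r d : ℕ} (dv : Fin r → ℕ) (i : Fin r) : Set (Fin d) :=
  {s | blockOffset dv i ≤ (s : ℕ) ∧ (s : ℕ) < blockOffset dv i + dv i}

/-- `(d₁,…,d_r)`-separability: `V` is a sum of functions each depending only on the
coordinates of one block. -/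
def BlockSep {r d : ℕ} (dv : Fin r → ℕ) (V : (Fin d → ℤ) → ℂ) : Prop :=
  ∃ Vb : Fin r → (Fin d → ℤ) → ℂ,
    (∀ i, DependsOnlyOn (blockSet dv i) (Vb i)) ∧ ∀ n, V n = ∑ i, Vb i n


/-- `(d₁,…,d_{r-1}) ⊕ d_r`-separability: `V = ∑_{i<r-1} V_i` where each `V_i`
depends only on the coordinates of block `i` together with those of block `r`. -/
def OplusSep {r d : ℕ} (dv : Fin r → ℕ) (hr : 0 < r) (V : (Fin d → ℤ) → ℂ) : Prop :=
  ∃ Vb : Fin r → (Fin d → ℤ) → ℂ,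
    (∀ i, DependsOnlyOn (blockSet dv i ∪ blockSet dv ⟨r - 1, by omega⟩) (Vb i)) ∧
    ∀ n, V n = ∑ i ∈ Finset.univ \ {(⟨r - 1, by omega⟩ : Fin r)}, Vb i n


/-!
The mixed difference `V(n[s:=b][t:=c]) + V n - V(n[s:=b]) - V(n[t:=c])` vanishes identically
exactly when `V` is `(s,t)`-separable. Assume it vanishes for `s, t` in distinct blocks among
the first `r - 1`. Then `Δ_k V(n) = V n - V(n with block k set to 0)` is unchanged by moving
any coordinate outside blocks `k` and `r`, and the `Δ_k` add up over those blocks, so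
`V n = V(n with blocks 1, …, r-1 set to 0) + ∑_k Δ_k V(n)`, where the first term only sees
block `r`.
-/

open Function Finset

theorem dependsOn_of_forall_update_eq {ι α β : Type*} [DecidableEq ι] [Fintype ι]
    {F : (ι → α) → β} {R : Set ι}
    (hF : ∀ t ∉ R, ∀ n c, F (update n t c) = F n) : DependsOn F R := by
  classical
  intro x y hxy
  have hmove : ∀ T : Finset ι, (∀ t ∈ T, t ∉ R) → F (T.piecewise y x) = F x := by
    intro T
    induction T using Finset.induction_on with
    | empty => exact fun _ => by rw [piecewise_empty]
    | insert t T htT ih =>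
      intro hT
      rw [piecewise_insert, hF t (hT t (mem_insert_self t T)),
        ih fun u hu => hT u (mem_insert_of_mem hu)]
  have hy : ({t | t ∉ R} : Finset ι).piecewise y x = y := by
    funext i
    by_cases hi : i ∈ R <;> simp [hi, hxy]
  rw [← hmove _ fun t ht => (mem_filter.mp ht).2, hy]

section MixedDiff

variable {ι α M : Type*} [DecidableEq ι] [AddCommGroup M]

def MixedDiffZero (s t : ι) (V : (ι → α) → M) : Prop :=
  ∀ n b c, V (update (update n s b) t c) + V n = V (update n s b) + V (update n t c)

theorem MixedDiffZero.symm {s t : ι} {V : (ι → α) → M} (h : MixedDiffZero s t V) :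
    MixedDiffZero t s V := by
  rcases eq_or_ne s t with rfl | hst
  · exact h
  · intro n b c
    rw [← update_comm hst, h n c b, add_comm]

theorem mixedDiffZero_of_add {s t : ι} {V Vs Vt : (ι → α) → M}
    (hs : DependsOn Vs ({t}ᶜ : Set ι)) (ht : DependsOn Vt ({s}ᶜ : Set ι))
    (hV : ∀ n, V n = Vs n + Vt n) : MixedDiffZero s t V := by
  intro n b c
  have h₁ : Vs (update (update n s b) t c) = Vs (update n s b) :=
    hs fun i hi => update_of_ne hi _ _
  have h₂ : Vt (update (update n s b) t c) = Vt (update n t c) :=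
    ht fun i hi => by by_cases hit : i = t <;> simp_all
  have h₃ : Vs (update n t c) = Vs n := hs fun i hi => update_of_ne hi _ _
  have h₄ : Vt (update n s b) = Vt n := ht fun i hi => update_of_ne hi _ _
  simp only [hV, h₁, h₂, h₃, h₄]
  abel

theorem MixedDiffZero.exists_add [Zero α] {s t : ι} {V : (ι → α) → M}
    (h : MixedDiffZero s t V) :
    ∃ Vs Vt : (ι → α) → M, DependsOn Vs ({t}ᶜ : Set ι) ∧ DependsOn Vt ({s}ᶜ : Set ι) ∧
      ∀ n, V n = Vs n + Vt n := by
  -- the mixed difference at `b = c = 0` splits `V n` into a `t`-free and an `s`-free part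
  refine ⟨fun n => V (update n t 0) - V (update (update n s 0) t 0), fun n => V (update n s 0),
    fun x y hxy => ?_, fun x y hxy => ?_, fun n => ?_⟩
  · simp only
    congr 2 <;> funext i <;> by_cases hit : i = t <;> by_cases his : i = s <;> simp_all
  · simp only
    congr 1; funext i; by_cases his : i = s <;> simp_all
  · rw [eq_sub_of_add_eq' (h n 0 0)]
    dsimp only
    abel

section BlockDiff

variable [Zero α]

def blockDiff (S : Finset ι) (V : (ι → α) → M) (n : ι → α) : M :=
  V n - V (S.piecewise 0 n)

theorem blockDiff_insert {s : ι} {S : Finset ι} (hs : s ∉ S) (V : (ι → α) → M) (n : ι → α) :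
    blockDiff (insert s S) V n = (V n - V (update n s 0)) + blockDiff S V (update n s 0) := by
  rw [blockDiff, blockDiff, piecewise_insert, update_piecewise_of_notMem _ _ _ hs,
    Pi.zero_apply]
  abel

theorem blockDiff_update {S : Finset ι} {t : ι} {V : (ι → α) → M} (ht : t ∉ S)
    (hV : ∀ s ∈ S, MixedDiffZero s t V) (n : ι → α) (c : α) :
    blockDiff S V (update n t c) = blockDiff S V n := by
  induction S using Finset.induction_on generalizing n with
  | empty => rw [blockDiff, blockDiff, piecewise_empty, piecewise_empty, sub_self, sub_self]
  | insert s S hsS ih =>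
    have hts : t ≠ s := fun h => ht (h ▸ mem_insert_self s S)
    rw [blockDiff_insert hsS, blockDiff_insert hsS, update_comm hts,
      ih (fun h => ht (mem_insert_of_mem h)) (fun u hu => hV u (mem_insert_of_mem hu))]
    have hst := hV s (mem_insert_self s S) n 0 c
    congr 1
    rw [sub_eq_sub_iff_add_eq_add, add_comm, ← hst, add_comm]

theorem dependsOn_blockDiff [Fintype ι] {S : Finset ι} {R : Set ι} {V : (ι → α) → M}
    (hSR : (S : Set ι) ⊆ R) (hV : ∀ s ∈ S, ∀ t ∉ R, MixedDiffZero s t V) :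
    DependsOn (blockDiff S V) R :=
  dependsOn_of_forall_update_eq fun t ht =>
    blockDiff_update (fun h => ht (hSR h)) fun s hs => hV s hs t ht

theorem blockDiff_union [Fintype ι] {S T : Finset ι} {V : (ι → α) → M} (hST : Disjoint S T)
    (hV : ∀ s ∈ S, ∀ t ∈ T, MixedDiffZero s t V) (n : ι → α) :
    blockDiff (S ∪ T) V n = blockDiff S V n + blockDiff T V n := by
  have hS : DependsOn (blockDiff S V) (↑T)ᶜ :=
    dependsOn_blockDiff (Set.subset_compl_iff_disjoint_right.mpr (disjoint_coe.mpr hST))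
      fun s hs t ht => hV s hs t (not_not.mp ht)
  have hzero : (S ∪ T).piecewise (0 : ι → α) n =
      S.piecewise (0 : ι → α) (T.piecewise (0 : ι → α) n) := by
    funext i
    by_cases hiS : i ∈ S <;> by_cases hiT : i ∈ T <;> simp [hiS, hiT]
  calc blockDiff (S ∪ T) V n
      = blockDiff S V (T.piecewise 0 n) + blockDiff T V n := by
        rw [blockDiff, blockDiff, blockDiff, hzero]; abel
    _ = blockDiff S V n + blockDiff T V n := by
        rw [hS fun i hi => piecewise_eq_of_notMem _ _ _ hi]

theorem blockDiff_biUnion [Fintype ι] {κ : Type*} [DecidableEq κ] {B : κ → Finset ι}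
    {K : Finset κ} {V : (ι → α) → M} (hB : (K : Set κ).PairwiseDisjoint B)
    (hV : ∀ j ∈ K, ∀ k ∈ K, j ≠ k → ∀ s ∈ B j, ∀ t ∈ B k, MixedDiffZero s t V) (n : ι → α) :
    blockDiff (K.biUnion B) V n = ∑ k ∈ K, blockDiff (B k) V n := by
  induction K using Finset.induction_on with
  | empty => rw [biUnion_empty, blockDiff, piecewise_empty, sub_self, sum_empty]
  | insert j K hjK ih =>
    have hjK' : ∀ k ∈ K, j ≠ k := fun k hk h => hjK (h ▸ hk)
    rw [biUnion_insert, sum_insert hjK, blockDiff_union, ih]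
    · exact hB.subset (by simp)
    · exact fun j hj k hk => hV j (mem_insert_of_mem hj) k (mem_insert_of_mem hk)
    · exact (disjoint_biUnion_right _ _ _).mpr fun k hk =>
        hB (by simp) (by simp [hk]) (hjK' k hk)
    · intro s hs t ht
      obtain ⟨k, hk, htk⟩ := mem_biUnion.mp ht
      exact hV j (mem_insert_self j K) k (mem_insert_of_mem hk) (hjK' k hk) s hs t htk

end BlockDiff

section Blocks

variable {κ : Type*} [Fintype κ] [DecidableEq κ]

def IsOplusSep (B : κ → Finset ι) (ℓ : κ) (V : (ι → α) → M) : Prop :=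
  ∃ W : κ → (ι → α) → M, (∀ k, DependsOn (W k) (↑(B k ∪ B ℓ) : Set ι)) ∧
    ∀ n, V n = ∑ k ∈ univ \ {ℓ}, W k n

variable {B : κ → Finset ι} {ℓ : κ} {V : (ι → α) → M}

theorem IsOplusSep.mixedDiffZero (hB : Pairwise (Disjoint on B)) (hV : IsOplusSep B ℓ V)
    {j k : κ} (hjk : j ≠ k) (hj : j ≠ ℓ) (hk : k ≠ ℓ) {s t : ι} (hs : s ∈ B j) (ht : t ∈ B k) :
    MixedDiffZero s t V := by
  obtain ⟨W, hW, hsum⟩ := hV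
  have hcompl : ∀ {x : ι} {i i'}, x ∈ B i → i ≠ i' → i ≠ ℓ →
      (↑(B i' ∪ B ℓ) : Set ι) ⊆ {x}ᶜ := by
    rintro x i i' hx hii' hiℓ y hy rfl
    rcases mem_union.mp hy with hy | hy
    · exact disjoint_left.mp (hB hii') hx hy
    · exact disjoint_left.mp (hB hiℓ) hx hy
  have hkmem : k ∈ univ \ {ℓ} := by simpa using hk
  refine mixedDiffZero_of_add (Vs := fun n => ∑ i ∈ (univ \ {ℓ}).erase k, W i n) (Vt := W k)
    (fun x y hxy => sum_congr rfl fun i hi => ?_) ((hW k).mono (hcompl hs hjk hj))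
    fun n => by rw [hsum, ← add_sum_erase _ _ hkmem, add_comm]
  exact (hW i).mono (hcompl ht (ne_of_mem_erase hi).symm hk) hxy

theorem isOplusSep_of_mixedDiffZero [Zero α] [Fintype ι] [Nontrivial κ]
    (hB : Pairwise (Disjoint on B)) (hcover : ∀ i, ∃ k, i ∈ B k)
    (hV : ∀ j k, j ≠ k → j ≠ ℓ → k ≠ ℓ → ∀ s ∈ B j, ∀ t ∈ B k, MixedDiffZero s t V) :
    IsOplusSep B ℓ V := by
  obtain ⟨k₀, hk₀⟩ := exists_ne ℓ
  set U := (univ \ {ℓ}).biUnion B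
  have hcore : DependsOn (fun n => V (U.piecewise 0 n)) (B ℓ : Set ι) := fun x y hxy => by
    refine congrArg V (U.piecewise_congr (fun _ _ => rfl) fun i hi => hxy i ?_)
    obtain ⟨k, hk⟩ := hcover i
    by_contra hiℓ
    have hkℓ : k ≠ ℓ := by rintro rfl; exact hiℓ hk
    exact hi (mem_biUnion.mpr ⟨k, by simpa using hkℓ, hk⟩)
  have hdiff : ∀ k ≠ ℓ, DependsOn (blockDiff (B k) V) (↑(B k ∪ B ℓ) : Set ι) := by
    intro k hk
    refine dependsOn_blockDiff (by simp) fun s hs t ht => ?_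
    obtain ⟨j, hj⟩ := hcover t
    have htk : j ≠ k := by rintro rfl; exact ht (by simp [hj])
    have htℓ : j ≠ ℓ := by rintro rfl; exact ht (by simp [hj])
    exact hV k j htk.symm hk htℓ s hs t hj
  -- `V (U.piecewise 0 n)` only sees block `ℓ`; it is added to the summand of some `k₀ ≠ ℓ`
  refine ⟨fun k n => if k = ℓ then 0 else
      blockDiff (B k) V n + if k = k₀ then V (U.piecewise 0 n) else 0, fun k => ?_, fun n => ?_⟩
  · by_cases hk : k = ℓ
    · exact fun x y _ => by simp only [if_pos hk]
    · intro x y hxy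
      simp only [if_neg hk, hdiff k hk hxy]
      split_ifs
      · exact congrArg (_ + ·) (hcore fun i hi => hxy i (by simp [hi]))
      · rfl
  · have hsplit : blockDiff U V n = ∑ k ∈ univ \ {ℓ}, blockDiff (B k) V n :=
      blockDiff_biUnion (fun j _ k _ hjk => hB hjk)
        (fun j hj k hk hjk => hV j k hjk (by simpa using hj) (by simpa using hk)) n
    calc V n = V (U.piecewise 0 n) + blockDiff U V n := by rw [blockDiff]; abel
      _ = _ := by
        rw [hsplit, sum_congr rfl fun k hk => if_neg (by simpa using hk), sum_add_distrib,
          sum_ite_eq', if_pos (by simpa using hk₀)]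
        abel

theorem isOplusSep_iff_mixedDiffZero [Zero α] [Fintype ι] [Nontrivial κ]
    (hB : Pairwise (Disjoint on B)) (hcover : ∀ i, ∃ k, i ∈ B k) :
    IsOplusSep B ℓ V ↔
      ∀ j k, j ≠ k → j ≠ ℓ → k ≠ ℓ → ∀ s ∈ B j, ∀ t ∈ B k, MixedDiffZero s t V :=
  ⟨fun h _ _ hjk hj hk _ hs _ ht => h.mixedDiffZero hB hjk hj hk hs ht,
    isOplusSep_of_mixedDiffZero hB hcover⟩

end Blocks

end MixedDiff

theorem sepPair_iff_mixedDiffZero {d : ℕ} {s t : Fin d} {V : (Fin d → ℤ) → ℂ} :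
    SepPair s t V ↔ MixedDiffZero s t V :=
  ⟨fun ⟨_, _, hs, ht, hV⟩ => mixedDiffZero_of_add (fun x y => hs x y) (fun x y => ht x y) hV,
    fun h => h.exists_add⟩

section BlockPartition

variable {r : ℕ} (dv : Fin r → ℕ)

theorem finSigmaFinEquiv_val (x : (i : Fin r) × Fin (dv i)) :
    (finSigmaFinEquiv x : ℕ) = blockOffset dv x.1 + x.2 := by
  have hIio : Iio x.1 = univ.map (Fin.castLEEmb x.1.isLt.le) := by
    ext j
    simp only [mem_Iio, mem_map, mem_univ, true_and, Fin.castLEEmb_apply]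
    exact ⟨fun h => ⟨⟨j, h⟩, rfl⟩, by rintro ⟨k, rfl⟩; exact k.isLt⟩
  rw [finSigmaFinEquiv_apply, blockOffset, hIio, sum_map]
  rfl

theorem mem_blockSet_iff {d : ℕ} {i : Fin r} {s : Fin d} :
    s ∈ blockSet dv i ↔ ∃ j : Fin (dv i), (s : ℕ) = finSigmaFinEquiv ⟨i, j⟩ := by
  simp only [blockSet, Set.mem_ofPred_eq, finSigmaFinEquiv_val]
  constructor
  · rintro ⟨hlo, hhi⟩
    exact ⟨⟨s - blockOffset dv i, by omega⟩, by simp only; omega⟩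
  · rintro ⟨j, hj⟩
    have := j.isLt
    omega

noncomputable def blockFinset (d : ℕ) (i : Fin r) : Finset (Fin d) :=
  (Set.toFinite (blockSet dv i)).toFinset

theorem coe_blockFinset (d : ℕ) (i : Fin r) :
    (blockFinset dv d i : Set (Fin d)) = blockSet dv i :=
  Set.Finite.coe_toFinset _

theorem mem_blockFinset {d : ℕ} {i : Fin r} {s : Fin d} :
    s ∈ blockFinset dv d i ↔ s ∈ blockSet dv i :=
  Set.Finite.mem_toFinset _

theorem pairwise_disjoint_blockFinset (d : ℕ) : Pairwise (Disjoint on blockFinset dv d) := by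
  intro i i' hii'
  refine disjoint_left.mpr fun s hs hs' => hii' ?_
  obtain ⟨j, hj⟩ := (mem_blockSet_iff dv).mp ((mem_blockFinset dv).mp hs)
  obtain ⟨j', hj'⟩ := (mem_blockSet_iff dv).mp ((mem_blockFinset dv).mp hs')
  exact congrArg Sigma.fst (finSigmaFinEquiv.injective (Fin.ext (hj.symm.trans hj')))

theorem exists_mem_blockFinset {d : ℕ} (hd : d = ∑ j, dv j) (s : Fin d) :
    ∃ i, s ∈ blockFinset dv d i := by
  subst hd
  exact ⟨(finSigmaFinEquiv.symm s).1, (mem_blockFinset dv).mpr <|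
    (mem_blockSet_iff dv).mpr ⟨(finSigmaFinEquiv.symm s).2, by simp⟩⟩

theorem oplusSep_iff_isOplusSep {d : ℕ} (hr : 0 < r) (V : (Fin d → ℤ) → ℂ) :
    OplusSep dv hr V ↔ IsOplusSep (blockFinset dv d) ⟨r - 1, by omega⟩ V := by
  simp only [OplusSep, IsOplusSep, coe_union, coe_blockFinset]
  -- `DependsOnlyOn S f` unfolds to `DependsOn f S`
  rfl

end BlockPartition

/-- Theorem 2.4: `V` is `(d₁,…,d_{r-1}) ⊕ d_r`-separable iff it is `(s,t)`-separable
for all pairs of indices `s, t` lying in distinct blocks among the first `r-1` blocks. -/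
theorem oplusSep_iff_sepPair {r d : ℕ} (dv : Fin r → ℕ) (hr : 2 ≤ r)
    (hd : d = ∑ j, dv j)
    (V : (Fin d → ℤ) → ℂ) :
    OplusSep dv (by omega) V ↔
      ∀ i m : Fin r, i < m → (m : ℕ) < r - 1 → ∀ s t : Fin d,
        s ∈ blockSet dv i → t ∈ blockSet dv m → SepPair s t V := by
  have : Nontrivial (Fin r) := Fin.nontrivial_iff_two_le.mpr hr
  have hlast : ∀ k : Fin r, k ≠ ⟨r - 1, by omega⟩ ↔ (k : ℕ) < r - 1 := fun k => by
    rw [Ne, Fin.ext_iff]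
    have := k.isLt
    dsimp only
    omega
  rw [oplusSep_iff_isOplusSep, isOplusSep_iff_mixedDiffZero (pairwise_disjoint_blockFinset dv d)
    (exists_mem_blockFinset dv hd)]
  simp only [hlast, mem_blockFinset, sepPair_iff_mixedDiffZero]
  constructor
  · exact fun h i m him hm s t hs ht =>
      h i m him.ne (lt_trans (Fin.lt_def.mp him) hm) hm s hs t ht
  · intro h j k hjk hj hk s hs t ht
    rcases hjk.lt_or_gt with hlt | hlt
    · exact h j k hlt hk s t hs ht
    · exact (h k j hlt hj t s ht hs).symm
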